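/- Let n ≥ 1 and p > 1 and consider the graded commutative ring A = ℤ[x1, x2]/(x1^(p+1), x2·(n·x1 + x2)) with deg x1 = deg x2 = 2. Then for integers n, n' ≥ 0, the rings ℤ[x1, x2]/(x1^(p+1), x2·(n·x1 + x2)) and ℤ[x1, x2]/(x1^(p+1), x2·(n'·x1 + x2)) are isomorphic as graded rings if and only if n' = n (for n, n' ≥ 0: they are isomorphic iff |n'| = |n|). -/

import Mathlib

open MvPolynomial

/-- The cohomology ring `A n = ℤ[x₁,x₂]/(x₁^{p+1}, x₂(n·x₁+x₂))` of `S_n = P(O ⊕ O(n))`. -/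
def cohRing (p n : ℕ) : Type :=
  MvPolynomial (Fin 2) ℤ ⧸
    Ideal.span ({X 0 ^ (p + 1), X 1 * ((n : MvPolynomial (Fin 2) ℤ) * X 0 + X 1)} :
      Set (MvPolynomial (Fin 2) ℤ))

noncomputable instance (p n : ℕ) : CommRing (cohRing p n) :=
  inferInstanceAs (CommRing (_ ⧸ _))

/-- The degree-2 component of `cohRing p n`, spanned by the classes of `x₁` and `x₂`. -/
noncomputable def degTwo (p n : ℕ) : Submodule ℤ (cohRing p n) :=
  Submodule.span ℤ
    {Ideal.Quotient.mk _ (X 0 : MvPolynomial (Fin 2) ℤ),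
     Ideal.Quotient.mk _ (X 1 : MvPolynomial (Fin 2) ℤ)}


/-! A graded isomorphism `e` sends `x ↦ a x' + b y'` and `y ↦ c x' + d y'` with `ad - bc = ±1`.
We compute in `ℤ[t]/(t^{p+1})[y]/(y(y + n't))`, which is free over `ℤ` on `t^i y^j` (`i ≤ p`,
`j ≤ 1`) and receives a map from `cohRing p n'`. There the relation `x^{p+1} = 0` forces
`(a - n'b)^{p+1} = a^{p+1}`, so `|a - n'b| = |a|`, while `y(nx + y) = 0`, read off in degree four
(which needs `p ≥ 2`), leaves two cases: `c = 0` and `n'd = n(a - n'b)`, or `c = -na` and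
`n'(d + nb) = -n(a - n'b)`. In both the factors next to `n'` and `n` are units, so `n' = n`. -/

theorem Int.natAbs_sub_eq_of_pow_eq {a b : ℤ} {m : ℕ} (hm : m ≠ 0) (h : (a - b) ^ m = a ^ m) :
    (a - b).natAbs = a.natAbs :=
  Nat.pow_left_injective hm (by simpa only [Int.natAbs_pow] using congrArg Int.natAbs h)

theorem eq_of_natCast_mul_isUnit_eq {m n : ℕ} {u v : ℤ} (hu : IsUnit u) (hv : IsUnit v)
    (h : (m : ℤ) * u = n * v) : m = n := by
  simpa [Int.natAbs_mul, Int.isUnit_iff_natAbs_eq.1 hu, Int.isUnit_iff_natAbs_eq.1 hv]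
    using congrArg Int.natAbs h

theorem eq_of_isUnit_det_of_relations {n n' : ℕ} {a b c d : ℤ} (hdet : IsUnit (a * d - b * c))
    (hpow : (a - n' * b).natAbs = a.natAbs) (hcc : c * (n * a + c) = 0)
    (hcd : c * (n * b + d) + d * (n * a + c) = n' * (d * (n * b + d))) : n' = n := by
  have hunit : IsUnit a → IsUnit (a - n' * b) := fun ha =>
    Int.isUnit_iff_natAbs_eq.2 (hpow.trans (Int.isUnit_iff_natAbs_eq.1 ha))
  rcases mul_eq_zero.1 hcc with rfl | hnac
  · have hdet : IsUnit (a * d) := by simpa using hdet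
    have hd := isUnit_of_mul_isUnit_right hdet
    refine eq_of_natCast_mul_isUnit_eq hd (hunit (isUnit_of_mul_isUnit_left hdet)) ?_
    refine mul_left_cancel₀ hd.ne_zero ?_
    linear_combination -hcd
  · have hc : c = -(n * a) := by linear_combination hnac
    have hdet : IsUnit (a * (d + n * b)) := by convert hdet using 1; rw [hc]; ring
    have hdnb := isUnit_of_mul_isUnit_right hdet
    have hcd : c = n' * d := by
      refine mul_right_cancel₀ hdnb.ne_zero ?_
      linear_combination hcd - d * hnac
    refine eq_of_natCast_mul_isUnit_eq hdnb (hunit (isUnit_of_mul_isUnit_left hdet)).neg ?_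
    linear_combination hc - hcd

theorem exists_isUnit_det_of_span_pair_eq {R M : Type*} [CommRing R] [AddCommGroup M]
    [Module R M] {u v u' v' : M} (huv : LinearIndependent R ![u, v])
    (h : Submodule.span R {u', v'} = Submodule.span R {u, v}) :
    ∃ a b c d : R, u' = a • u + b • v ∧ v' = c • u + d • v ∧ IsUnit (a * d - b * c) := by
  have hu' : u' ∈ Submodule.span R {u, v} := h ▸ Submodule.subset_span (by simp)
  have hv' : v' ∈ Submodule.span R {u, v} := h ▸ Submodule.subset_span (by simp)
  have hu : u ∈ Submodule.span R {u', v'} := h.symm ▸ Submodule.subset_span (by simp)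
  have hv : v ∈ Submodule.span R {u', v'} := h.symm ▸ Submodule.subset_span (by simp)
  obtain ⟨a, b, rfl⟩ := Submodule.mem_span_pair.1 hu'
  obtain ⟨c, d, rfl⟩ := Submodule.mem_span_pair.1 hv'
  obtain ⟨a', b', hu⟩ := Submodule.mem_span_pair.1 hu
  obtain ⟨c', d', hv⟩ := Submodule.mem_span_pair.1 hv
  obtain ⟨h₁, h₂⟩ := LinearIndependent.pair_iff.1 huv (a' * a + b' * c - 1) (a' * b + b' * d)
    (by linear_combination (norm := module) hu)
  obtain ⟨h₃, h₄⟩ := LinearIndependent.pair_iff.1 huv (c' * a + d' * c) (c' * b + d' * d - 1)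
    (by linear_combination (norm := module) hv)
  refine ⟨a, b, c, d, rfl, rfl, IsUnit.of_mul_eq_one (a' * d' - b' * c') ?_⟩
  linear_combination (c' * b + d' * d) * h₁ - (c' * a + d' * c) * h₂ + h₄

theorem mul_add_mul_pow_succ {S : Type*} [CommRing S] {k t y : S} (h : y * (k * t + y) = 0)
    (a b : S) (m : ℕ) :
    k * (a * t + b * y) ^ (m + 1) =
      k * a ^ (m + 1) * t ^ (m + 1) + (a ^ (m + 1) - (a - k * b) ^ (m + 1)) * t ^ m * y := by
  induction m with
  | zero => ring
  | succ m ih =>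
    rw [pow_succ _ (m + 1), ← mul_assoc, ih]
    linear_combination (a ^ (m + 1) - (a - k * b) ^ (m + 1)) * b * t ^ m * h

namespace cohRing

noncomputable def x (p n : ℕ) : cohRing p n := Ideal.Quotient.mk _ (X 0)

noncomputable def y (p n : ℕ) : cohRing p n := Ideal.Quotient.mk _ (X 1)

variable {p n : ℕ} {S : Type*} [CommRing S]

noncomputable def lift (u v : S) (hu : u ^ (p + 1) = 0) (hv : v * (n * u + v) = 0) :
    cohRing p n →+* S :=
  Ideal.Quotient.lift _ (aeval ![u, v]).toRingHom <| by
    intro f hf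
    refine (Ideal.span_le (I := RingHom.ker _)).2 ?_ hf
    rintro _ (rfl | rfl) <;> simp [hu, hv]

section lift

variable {u v : S} {hu : u ^ (p + 1) = 0} {hv : v * (n * u + v) = 0}

@[simp] theorem lift_x : lift u v hu hv (x p n) = u :=
  (Ideal.Quotient.lift_mk _ _ _).trans (by simp)

@[simp] theorem lift_y : lift u v hu hv (y p n) = v :=
  (Ideal.Quotient.lift_mk _ _ _).trans (by simp)

end lift

theorem x_pow_succ : x p n ^ (p + 1) = 0 :=
  (map_pow (Ideal.Quotient.mk _) _ _).symm.trans
    (Ideal.Quotient.eq_zero_iff_mem.2 (Ideal.subset_span (by simp)))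

theorem y_mul : y p n * (n * x p n + y p n) = 0 := by
  have h : Ideal.Quotient.mk
      (Ideal.span {X 0 ^ (p + 1), X 1 * ((n : MvPolynomial (Fin 2) ℤ) * X 0 + X 1)})
      (X 1 * ((n : MvPolynomial (Fin 2) ℤ) * X 0 + X 1)) = 0 :=
    Ideal.Quotient.eq_zero_iff_mem.2 (Ideal.subset_span (by simp))
  rw [map_mul, map_add, map_mul, map_natCast] at h
  exact h

theorem map_x_pow_succ (f : cohRing p n →+* S) : f (x p n) ^ (p + 1) = 0 := by
  rw [← map_pow, x_pow_succ, map_zero]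

theorem map_y_mul (f : cohRing p n →+* S) : f (y p n) * (n * f (x p n) + f (y p n)) = 0 := by
  rw [← map_natCast f, ← map_mul, ← map_add, ← map_mul, y_mul, map_zero]

theorem map_degTwo (f : cohRing p n →+* S) :
    (degTwo p n).map f.toIntAlgHom.toLinearMap = Submodule.span ℤ {f (x p n), f (y p n)} := by
  change Submodule.map _ (Submodule.span ℤ {x p n, y p n}) = _
  rw [Submodule.map_span, Set.image_pair]
  rfl

end cohRing

section powBasis

variable {R : Type*} [CommRing R] {g : Polynomial R} (hg : g.Monic) {d : ℕ} (hd : g.natDegree = d)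

noncomputable def AdjoinRoot.powBasis : Module.Basis (Fin d) R (AdjoinRoot g) :=
  (AdjoinRoot.powerBasis' hg).basis.reindex (finCongr hd)

theorem AdjoinRoot.powBasis_apply (i : Fin d) : powBasis hg hd i = root g ^ (i : ℕ) := by
  rw [powBasis, Module.Basis.reindex_apply, PowerBasis.basis_eq_pow]
  rfl

end powBasis

abbrev truncPoly (p : ℕ) : Type := AdjoinRoot (Polynomial.X ^ (p + 1) : Polynomial ℤ)

instance (p : ℕ) : Nontrivial (truncPoly p) :=
  AdjoinRoot.nontrivial _ (by rw [Polynomial.degree_X_pow]; exact_mod_cast p.succ_ne_zero)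

noncomputable def cohModelPoly (p k : ℕ) : Polynomial (truncPoly p) :=
  Polynomial.X * (Polynomial.X + Polynomial.C ((k : truncPoly p) * AdjoinRoot.root _))

theorem cohModelPoly_monic (p k : ℕ) : (cohModelPoly p k).Monic :=
  Polynomial.monic_X.mul (Polynomial.monic_X_add_C _)

theorem cohModelPoly_natDegree (p k : ℕ) : (cohModelPoly p k).natDegree = 2 := by
  rw [cohModelPoly, Polynomial.monic_X.natDegree_mul (Polynomial.monic_X_add_C _),
    Polynomial.natDegree_X, Polynomial.natDegree_X_add_C]

/-- `ℤ[t]/(t^{p+1})[y]/(y(y + kt))`, isomorphic to `cohRing p k`; only the map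
`cohModel.ofCohRing` is needed. -/
abbrev cohModel (p k : ℕ) : Type := AdjoinRoot (cohModelPoly p k)

namespace cohModel

noncomputable abbrev t (p k : ℕ) : cohModel p k := algebraMap (truncPoly p) _ (AdjoinRoot.root _)

noncomputable abbrev y (p k : ℕ) : cohModel p k := AdjoinRoot.root _

section

variable (p k : ℕ)

theorem t_pow_succ : t p k ^ (p + 1) = 0 := by
  rw [← map_pow, ← AdjoinRoot.mk_X, ← map_pow, AdjoinRoot.mk_self, map_zero]

theorem y_mul : y p k * (k * t p k + y p k) = 0 := by
  have h : Polynomial.aeval (y p k) (cohModelPoly p k) = 0 := by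
    rw [AdjoinRoot.aeval_eq, AdjoinRoot.mk_self]
  simp only [cohModelPoly, map_mul, map_add, map_natCast, Polynomial.aeval_X,
    Polynomial.aeval_C] at h
  linear_combination h

noncomputable def basis : Module.Basis (Fin (p + 1) × Fin 2) ℤ (cohModel p k) :=
  (AdjoinRoot.powBasis (Polynomial.monic_X_pow _) (Polynomial.natDegree_X_pow _)).smulTower
    (AdjoinRoot.powBasis (cohModelPoly_monic p k) (cohModelPoly_natDegree p k))

theorem basis_apply (i : Fin (p + 1)) (j : Fin 2) :
    basis p k (i, j) = t p k ^ (i : ℕ) * y p k ^ (j : ℕ) := by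
  rw [basis, Module.Basis.smulTower_apply, AdjoinRoot.powBasis_apply, AdjoinRoot.powBasis_apply,
    Algebra.smul_def, map_pow]

noncomputable def ofCohRing : cohRing p k →+* cohModel p k :=
  cohRing.lift (t p k) (y p k) (t_pow_succ p k) (y_mul p k)

theorem map_degTwo_ofCohRing :
    (degTwo p k).map (ofCohRing p k).toIntAlgHom.toLinearMap =
      Submodule.span ℤ {t p k, y p k} := by
  rw [cohRing.map_degTwo, ofCohRing, cohRing.lift_x, cohRing.lift_y]

end

variable {p k : ℕ}

theorem linearIndependent_pair {i j i' j' : ℕ} (hi : i ≤ p) (hi' : i' ≤ p) (hj : j ≤ 1)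
    (hj' : j' ≤ 1) (hne : (i, j) ≠ (i', j')) :
    LinearIndependent ℤ ![t p k ^ i * y p k ^ j, t p k ^ i' * y p k ^ j'] := by
  have hind := (LinearIndepOn.pair_iff (basis p k)
    (i := (⟨i, by omega⟩, ⟨j, by omega⟩)) (j := (⟨i', by omega⟩, ⟨j', by omega⟩))
    (by simpa [Prod.ext_iff, Fin.ext_iff] using hne)).1
      ((basis p k).linearIndependent.linearIndepOn _)
  exact LinearIndependent.pair_iff.2 fun α β h => hind α β (by simpa [basis_apply] using h)

theorem linearIndependent_t_y (hp : 1 ≤ p) : LinearIndependent ℤ ![t p k, y p k] := by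
  simpa using linearIndependent_pair (k := k) (i := 1) (j := 0) (i' := 0) (j' := 1)
    hp (Nat.zero_le p) zero_le_one le_rfl (by simp)

theorem eq_zero_of_smul_t_pow_mul_y {g : ℤ} (h : g • (t p k ^ p * y p k) = 0) : g = 0 := by
  have hne : t p k ^ p * y p k ≠ 0 := by
    simpa [basis_apply] using (basis p k).ne_zero (Fin.last p, 1)
  exact ((basis p k).smul_eq_zero.1 h).resolve_right hne

theorem natAbs_sub_mul_eq {a b : ℤ} (h : (a * t p k + b * y p k) ^ (p + 1) = 0) :
    (a - k * b).natAbs = a.natAbs := by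
  have hcoeff : (a ^ (p + 1) - (a - k * b) ^ (p + 1)) • (t p k ^ p * y p k) = 0 := by
    rw [zsmul_eq_mul]
    push_cast
    linear_combination -mul_add_mul_pow_succ (y_mul p k) a b p + k * h -
      k * a ^ (p + 1) * t_pow_succ p k
  exact Int.natAbs_sub_eq_of_pow_eq p.succ_ne_zero
    (sub_eq_zero.1 (eq_zero_of_smul_t_pow_mul_y hcoeff)).symm

theorem coeff_eq_of_mul_eq_zero (hp : 2 ≤ p) {a b c d : ℤ}
    (h : (a * t p k + b * y p k) * (c * t p k + d * y p k) = 0) :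
    a * c = 0 ∧ a * d + b * c = k * (b * d) := by
  have hcoeff := LinearIndependent.pair_iff.1 (linearIndependent_pair (k := k) (i := 2) (j := 0)
    (i' := 1) (j' := 1) hp (by omega) zero_le_one le_rfl (by simp))
    (a * c) (a * d + b * c - k * (b * d))
  simp only [zsmul_eq_mul] at hcoeff
  push_cast at hcoeff
  obtain ⟨h₁, h₂⟩ := hcoeff (by linear_combination h - b * d * y_mul p k)
  exact ⟨h₁, sub_eq_zero.1 h₂⟩

end cohModel

/-- Choi–Masuda–Suh cohomological rigidity: for `p > 1` and `n, n' ≥ 0`, the graded rings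
`ℤ[x₁,x₂]/(x₁^{p+1}, x₂(n·x₁+x₂))` and `ℤ[x₁,x₂]/(x₁^{p+1}, x₂(n'·x₁+x₂))` (both generators
of degree 2) are isomorphic as graded rings if and only if `n' = n`. -/
theorem stmt14 (p : ℕ) (hp : 1 < p) (n n' : ℕ) :
    (∃ e : cohRing p n ≃+* cohRing p n',
        (degTwo p n).map e.toRingHom.toIntAlgHom.toLinearMap = degTwo p n') ↔ n' = n := by
  refine ⟨fun ⟨e, he⟩ => ?_, fun h => h ▸ ⟨RingEquiv.refl _, Submodule.map_id _⟩⟩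
  set ψ := (cohModel.ofCohRing p n').comp e.toRingHom
  have hspan : Submodule.span ℤ {ψ (cohRing.x p n), ψ (cohRing.y p n)} =
      Submodule.span ℤ {cohModel.t p n', cohModel.y p n'} := by
    rw [← cohRing.map_degTwo, ← cohModel.map_degTwo_ofCohRing, ← he, ← Submodule.map_comp]
    rfl
  obtain ⟨a, b, c, d, hx, hy, hdet⟩ :=
    exists_isUnit_det_of_span_pair_eq (cohModel.linearIndependent_t_y hp.le) hspan
  simp only [zsmul_eq_mul] at hx hy
  have hrel := cohRing.map_y_mul ψ
  rw [hx, hy] at hrel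
  obtain ⟨hcc, hcd⟩ := cohModel.coeff_eq_of_mul_eq_zero (a := c) (b := d) (c := n * a + c)
    (d := n * b + d) hp (by push_cast; linear_combination hrel)
  exact eq_of_isUnit_det_of_relations hdet
    (cohModel.natAbs_sub_mul_eq (hx ▸ cohRing.map_x_pow_succ ψ)) hcc hcd
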